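/- Let Ɓ = {(17,5)}. Then the inverse of 5 modulo 17 is b = 7, the degree d = 2·(-1) - 2 + 7·10/17 equals 2/17, and the K3 Hilbert series satisfies P_{2/17,Ɓ}(t) = (1-t^10)(1-t^12)(1-t^14)(1-t^15) / ((1-t^2)(1-t^3)(1-t^5)^2(1-t^7)(1-t^12)(1-t^17)) in ℚ(t). -/
import Mathlib


/-- The K3 Hilbert series `P_{d,Ɓ}` as an element of `ℚ(t)`, where the basket is
recorded as a list of pairs `(r, b)` (with `b` the inverse mod `r` of the
singularity type `a`), and `\overline{m}` is the least nonnegative residue mod `r`. -/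
noncomputable def K3HilbertSeries (d : ℚ) (B : List (ℕ × ℕ)) : RatFunc ℚ :=
  (1 + RatFunc.X) / (1 - RatFunc.X)
    + RatFunc.X * (1 + RatFunc.X) / (1 - RatFunc.X) ^ 3 * RatFunc.C (d / 2)
    - (B.map (fun p =>
        (1 / (1 - RatFunc.X ^ p.1)) *
          ∑ i ∈ Finset.Icc 1 (p.1 - 1),
            RatFunc.C ((((p.2 * i) % p.1 : ℕ) : ℚ)
                * ((p.1 : ℚ) - (((p.2 * i) % p.1 : ℕ) : ℚ)) / (2 * (p.1 : ℚ)))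
              * RatFunc.X ^ i)).sum

lemma one_sub_X_pow_ne (n : ℕ) (hn : 0 < n) : (1 - RatFunc.X ^ n : RatFunc ℚ) ≠ 0 := by
  have h : (1 - RatFunc.X ^ n : RatFunc ℚ)
      = algebraMap (Polynomial ℚ) (RatFunc ℚ) (1 - Polynomial.X ^ n) := by
    simp [map_sub, map_pow, RatFunc.algebraMap_X]
  rw [h]
  apply RatFunc.algebraMap_ne_zero
  intro hc
  have := congrArg Polynomial.natDegree (sub_eq_zero.mp hc).symm
  simp [Polynomial.natDegree_X_pow] at this
  omega

instance : CharZero (RatFunc ℚ) :=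
  charZero_of_injective_algebraMap (RatFunc.algebraMap_injective ℚ)

lemma ofNat_ne (n : ℕ) [n.AtLeastTwo] : (OfNat.ofNat n : RatFunc ℚ) ≠ 0 := by
  rw [show (OfNat.ofNat n : RatFunc ℚ) = algebraMap (Polynomial ℚ) (RatFunc ℚ) (OfNat.ofNat n) from (map_ofNat _ n).symm]
  exact RatFunc.algebraMap_ne_zero (by norm_num)

set_option maxHeartbeats 2000000 in
/-- For the basket `{(17,5)}`: the inverse of `5` mod `17` is
`b = 7`, the degree is `d = 2·(-1) - 2 + 7·10/17 = 2/17`, and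
`P(t) = (1-t^10)(1-t^12)(1-t^14)(1-t^15) /
  ((1-t^2)(1-t^3)(1-t^5)^2(1-t^7)(1-t^12)(1-t^17))`. -/
theorem k3_Altinok4_79_hilbert_series :
    (5 * 7) % 17 = 1 ∧
    (2 * (-1 : ℚ) - 2 + 7 * 10 / 17 = 2 / 17) ∧
    K3HilbertSeries (2 / 17) [(17, 7)]
      = (1 - RatFunc.X ^ 10) * (1 - RatFunc.X ^ 12) * (1 - RatFunc.X ^ 14)
          * (1 - RatFunc.X ^ 15) /
        ((1 - RatFunc.X ^ 2) * (1 - RatFunc.X ^ 3) * (1 - RatFunc.X ^ 5) ^ 2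
          * (1 - RatFunc.X ^ 7) * (1 - RatFunc.X ^ 12) * (1 - RatFunc.X ^ 17)) := by
  refine ⟨by norm_num, by norm_num, ?_⟩
  unfold K3HilbertSeries
  have h1 := one_sub_X_pow_ne 1 one_pos
  have h2 := one_sub_X_pow_ne 2 (by norm_num)
  have h3 := one_sub_X_pow_ne 3 (by norm_num)
  have h5 := one_sub_X_pow_ne 5 (by norm_num)
  have h7 := one_sub_X_pow_ne 7 (by norm_num)
  have h12 := one_sub_X_pow_ne 12 (by norm_num)
  have h17 := one_sub_X_pow_ne 17 (by norm_num)
  rw [pow_one] at h1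
  simp only [List.map_cons, List.map_nil, List.sum_cons, List.sum_nil, add_zero]
  rw [show (17:ℕ)-1 = 16 from rfl, ← Finset.Ico_add_one_right_eq_Icc, Finset.sum_Ico_eq_sum_range]
  norm_num [Finset.sum_range_succ]
  have h34 : (34 : RatFunc ℚ) - RatFunc.X ^ 17 * 34 ≠ 0 := by
    have : (34 : RatFunc ℚ) - RatFunc.X ^ 17 * 34 = 34 * (1 - RatFunc.X ^ 17) := by ring
    rw [this]; exact mul_ne_zero (ofNat_ne 34) h17
  have hc : (17 : RatFunc ℚ) - RatFunc.X * 51 + (RatFunc.X ^ 2 * 51 - RatFunc.X ^ 3 * 17) ≠ 0 := by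
    have : (17 : RatFunc ℚ) - RatFunc.X * 51 + (RatFunc.X ^ 2 * 51 - RatFunc.X ^ 3 * 17)
        = 17 * (1 - RatFunc.X) ^ 3 := by ring
    rw [this]; exact mul_ne_zero (ofNat_ne 17) (pow_ne_zero 3 h1)
  rw [mul_one_div, div_div, inv_mul_eq_div]
  have h17n : (17 : RatFunc ℚ) ≠ 0 := ofNat_ne 17
  have hA : (1 - RatFunc.X)^3 * 17 ≠ (0:RatFunc ℚ) := mul_ne_zero (pow_ne_zero 3 h1) h17n
  rw [div_add_div _ _ h1 hA, div_sub_div _ _ (mul_ne_zero h1 hA) h17,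
    div_eq_div_iff (mul_ne_zero (mul_ne_zero h1 hA) h17)
      (mul_ne_zero (mul_ne_zero (mul_ne_zero (mul_ne_zero (mul_ne_zero h2 h3)
        (pow_ne_zero 2 h5)) h7) h12) h17)]
  ring
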